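/- Let G be a compact Lie group, V a finite-dimensional real orthogonal representation of G, and Ω an open G-invariant subset of V. Let f ∈ F^∇_G(Ω) and let Y ⊆ Ω be a closed G-invariant subset with f⁻¹(0) ∩ Y = ∅. Then the restriction f|_{D_f ∖ Y} belongs to F^∇_G(Ω) and is gradient otopic to f. -/

import Mathlib

open scoped Manifold Classical

set_option linter.unusedSectionVars false

noncomputable section

section Defs

variable {Γ : Type*} [Group Γ] {W : Type*} [NormedAddCommGroup W]
  [InnerProductSpace ℝ W] [CompleteSpace W]

/-- The stabilizer subgroup of a point under the action `ρ`. -/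
def stab (ρ : Γ →* (W ≃ₗᵢ[ℝ] W)) (x : W) : Subgroup Γ where
  carrier := {g | ρ g x = x}
  one_mem' := by simp
  mul_mem' := by
    intro a b ha hb
    simp only [Set.mem_setOf_eq] at *
    rw [map_mul]
    show ρ a (ρ b x) = x
    rw [hb, ha]
  inv_mem' := by
    intro a ha
    simp only [Set.mem_setOf_eq] at *
    have h1 : ρ a (ρ a⁻¹ x) = ρ a x := by
      rw [ha]
      show (ρ a * ρ a⁻¹) x = x
      rw [← map_mul]
      simp
    exact (ρ a).injective h1

/-- The conjugate subgroup `gHg⁻¹`. -/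
def conjSub (g : Γ) (H : Subgroup Γ) : Subgroup Γ :=
  H.map ((MulAut.conj g).toMonoidHom)

/-- An equivariant local map on `Ω`: a continuous equivariant map defined on an open
invariant subset of `Ω` whose zero set is compact. -/
structure EqLocalMap (ρ : Γ →* (W ≃ₗᵢ[ℝ] W)) (Ω : Set W) where
  dom : Set W
  toFun : W → W
  dom_sub : dom ⊆ Ω
  dom_open : IsOpen dom
  dom_inv : ∀ (g : Γ) (x : W), x ∈ dom → ρ g x ∈ dom
  cont : ContinuousOn toFun dom
  equivariant : ∀ (g : Γ) (x : W), x ∈ dom → toFun (ρ g x) = ρ g (toFun x)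
  zeros_compact : IsCompact {x ∈ dom | toFun x = 0}

/-- A local map is gradient if it is the gradient of an invariant `C¹` potential
(the potential has a gradient at every point of the domain, and the gradient, being
the map itself, is continuous). -/
def IsGradMap {ρ : Γ →* (W ≃ₗᵢ[ℝ] W)} {Ω : Set W} (f : EqLocalMap ρ Ω) : Prop :=
  ∃ φ : W → ℝ, (∀ (g : Γ) (x : W), x ∈ f.dom → φ (ρ g x) = φ x) ∧
    ∀ x ∈ f.dom, HasGradientAt φ (f.toFun x) x

/-- An equivariant gradient local map on `Ω`; `F^∇_G(Ω)`. -/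
structure GradLocalMap (ρ : Γ →* (W ≃ₗᵢ[ℝ] W)) (Ω : Set W) extends EqLocalMap ρ Ω where
  isGrad : IsGradMap toEqLocalMap

/-- An otopy on `Ω`: an equivariant local map on `[0,1] × Ω` (`[0,1]` carrying the
trivial action), with domain open in `[0,1] × V` and compact zero set. -/
structure Otopy (ρ : Γ →* (W ≃ₗᵢ[ℝ] W)) (Ω : Set W) where
  dom : Set (ℝ × W)
  toFun : ℝ × W → W
  dom_relOpen : ∃ U : Set (ℝ × W), IsOpen U ∧ dom = U ∩ (Set.Icc (0:ℝ) 1) ×ˢ Ω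
  dom_inv : ∀ (g : Γ) (t : ℝ) (x : W), (t, x) ∈ dom → (t, ρ g x) ∈ dom
  cont : ContinuousOn toFun dom
  equivariant : ∀ (g : Γ) (t : ℝ) (x : W), (t, x) ∈ dom →
    toFun (t, ρ g x) = ρ g (toFun (t, x))
  zeros_compact : IsCompact {p ∈ dom | toFun p = 0}

/-- An otopy is gradient if every slice `h_t` is a gradient map. -/
def Otopy.IsGrad {ρ : Γ →* (W ≃ₗᵢ[ℝ] W)} {Ω : Set W} (h : Otopy ρ Ω) : Prop :=
  ∀ t : ℝ, ∃ φ : W → ℝ,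
    (∀ (g : Γ) (x : W), (t, x) ∈ h.dom → φ (ρ g x) = φ x) ∧
    ∀ x : W, (t, x) ∈ h.dom → HasGradientAt φ (h.toFun (t, x)) x

/-- Two equivariant local maps are otopic if some otopy joins them. -/
def Otopic {ρ : Γ →* (W ≃ₗᵢ[ℝ] W)} {Ω : Set W} (f g : EqLocalMap ρ Ω) : Prop :=
  ∃ h : Otopy ρ Ω,
    {x : W | (0, x) ∈ h.dom} = f.dom ∧ {x : W | (1, x) ∈ h.dom} = g.dom ∧
    (∀ x ∈ f.dom, h.toFun (0, x) = f.toFun x) ∧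
    (∀ x ∈ g.dom, h.toFun (1, x) = g.toFun x)

/-- Two equivariant gradient local maps are gradient otopic if some gradient otopy
joins them. -/
def GradOtopic {ρ : Γ →* (W ≃ₗᵢ[ℝ] W)} {Ω : Set W} (f g : GradLocalMap ρ Ω) : Prop :=
  ∃ h : Otopy ρ Ω, h.IsGrad ∧
    {x : W | (0, x) ∈ h.dom} = f.dom ∧ {x : W | (1, x) ∈ h.dom} = g.dom ∧
    (∀ x ∈ f.dom, h.toFun (0, x) = f.toFun x) ∧
    (∀ x ∈ g.dom, h.toFun (1, x) = g.toFun x)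

/-- The set of gradient otopy classes `F^∇_G[Ω]`. -/
def GradClasses (ρ : Γ →* (W ≃ₗᵢ[ℝ] W)) (Ω : Set W) : Type _ :=
  Quot (GradOtopic (ρ := ρ) (Ω := Ω))

/-- `Ω_H`: points of `Ω` with stabilizer exactly `H`. -/
def omegaH (ρ : Γ →* (W ≃ₗᵢ[ℝ] W)) (Ω : Set W) (H : Subgroup Γ) : Set W :=
  {x ∈ Ω | stab ρ x = H}

/-- `Ω_(H)`: points of `Ω` with stabilizer conjugate to `H`. -/
def omegaConj (ρ : Γ →* (W ≃ₗᵢ[ℝ] W)) (Ω : Set W) (H : Subgroup Γ) : Set W :=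
  {x ∈ Ω | ∃ g : Γ, conjSub g H = stab ρ x}

/-- The orbit space `S/N` of a subset `S` under the action of a subgroup `N`,
with the quotient topology. -/
def orbitSpace (ρ : Γ →* (W ≃ₗᵢ[ℝ] W)) (S : Set W) (N : Subgroup Γ) : Type _ :=
  Quot fun x y : S => ∃ n ∈ N, ρ n (x : W) = (y : W)

instance (ρ : Γ →* (W ≃ₗᵢ[ℝ] W)) (S : Set W) (N : Subgroup Γ) :
    TopologicalSpace (orbitSpace ρ S N) :=
  instTopologicalSpaceQuot

/-- `(H)` is a maximal orbit type in `Iso(Ω)`: every orbit type occurring in `Ω`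
which is `≥ (H)` equals `(H)`. -/
def IsMaximalOrbit (ρ : Γ →* (W ≃ₗᵢ[ℝ] W)) (Ω : Set W) (H : Subgroup Γ) : Prop :=
  ∀ x ∈ Ω, (∃ g : Γ, conjSub g H ≤ stab ρ x) → ∃ g : Γ, conjSub g H = stab ρ x

/-- The fixed-point subspace `V^H`, as a submodule. -/
def fixedSubmodule (ρ : Γ →* (W ≃ₗᵢ[ℝ] W)) (H : Subgroup Γ) : Submodule ℝ W where
  carrier := {x | ∀ h ∈ H, ρ h x = x}
  add_mem' := by
    intro a b ha hb h hh
    rw [map_add, ha h hh, hb h hh]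
  zero_mem' := by intro h hh; simp
  smul_mem' := by
    intro c a ha h hh
    rw [map_smul, ha h hh]

theorem fix_apply_mem (ρ : Γ →* (W ≃ₗᵢ[ℝ] W)) (H : Subgroup Γ) {n : Γ}
    (hn : n ∈ Subgroup.normalizer (H : Set Γ)) {x : W} (hx : x ∈ fixedSubmodule ρ H) :
    ρ n x ∈ fixedSubmodule ρ H := by
  intro h hh
  have h1 : n⁻¹ * h * n ∈ H := by
    have := (Subgroup.mem_normalizer_iff.mp hn (n⁻¹ * h * n)).mpr
    apply this
    have e : n * (n⁻¹ * h * n) * n⁻¹ = h := by group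
    rw [e]
    exact hh
  have e1 : h * n = n * (n⁻¹ * h * n) := by group
  calc ρ h (ρ n x) = (ρ h * ρ n) x := rfl
    _ = ρ (h * n) x := by rw [map_mul]
    _ = ρ (n * (n⁻¹ * h * n)) x := by rw [← e1]
    _ = (ρ n * ρ (n⁻¹ * h * n)) x := by rw [map_mul]
    _ = ρ n (ρ (n⁻¹ * h * n) x) := rfl
    _ = ρ n x := by rw [hx _ h1]

/-- The restriction of `ρ n`, for `n` in the normalizer of `H`, to a linear isometric
equivalence of `V^H`. -/
def restrictEquiv (ρ : Γ →* (W ≃ₗᵢ[ℝ] W)) (H : Subgroup Γ) (n : Subgroup.normalizer (H : Set Γ)) :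
    (fixedSubmodule ρ H) ≃ₗᵢ[ℝ] (fixedSubmodule ρ H) where
  toFun x := ⟨ρ (n : Γ) x, fix_apply_mem ρ H n.2 x.2⟩
  invFun x := ⟨ρ ((n : Γ)⁻¹) x, fix_apply_mem ρ H ((Subgroup.normalizer (H : Set Γ)).inv_mem n.2) x.2⟩
  map_add' := by intro a b; ext; simp
  map_smul' := by intro c a; ext; simp
  left_inv := by
    intro a; ext
    calc (ρ ((n : Γ)⁻¹)) ((ρ (n : Γ)) (a : W)) = (ρ ((n : Γ)⁻¹) * ρ (n : Γ)) (a : W) := rfl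
      _ = ρ ((n : Γ)⁻¹ * (n : Γ)) (a : W) := by rw [map_mul]
      _ = (a : W) := by simp
  right_inv := by intro a; ext; simp
  norm_map' := by intro a; simp

/-- The action of the normalizer `NH` on `V^H`.  Since `H` acts trivially on `V^H`,
this is precisely the action of the Weyl group `WH = NH/H` on `V^H`; equivariance
(resp. invariance) with respect to it is equivalent to `WH`-equivariance
(resp. `WH`-invariance). -/
def restrictAction (ρ : Γ →* (W ≃ₗᵢ[ℝ] W)) (H : Subgroup Γ) :
    Subgroup.normalizer (H : Set Γ) →* ((fixedSubmodule ρ H) ≃ₗᵢ[ℝ] (fixedSubmodule ρ H)) where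
  toFun := restrictEquiv ρ H
  map_one' := by
    refine LinearIsometryEquiv.ext fun x => Subtype.ext ?_
    show ρ ((1 : Subgroup.normalizer (H : Set Γ)) : Γ) (x : W) = _
    simp [LinearIsometryEquiv.coe_one]
  map_mul' := by
    intro a b
    refine LinearIsometryEquiv.ext fun x => Subtype.ext ?_
    show ρ ((a * b : Subgroup.normalizer (H : Set Γ)) : Γ) (x : W) = _
    push_cast
    rw [map_mul]
    rfl

variable [FiniteDimensional ℝ W]

/-- `Ω_H` viewed as a subset of `V^H`. -/
def omegaHSub (ρ : Γ →* (W ≃ₗᵢ[ℝ] W)) (Ω : Set W) (H : Subgroup Γ) :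
    Set (fixedSubmodule ρ H) :=
  Subtype.val ⁻¹' (omegaH ρ Ω H)

/-- `k` is the restriction `f|_{D_f ∩ Ω_H}` of `f`, viewed as a `WH`-equivariant
gradient local map on `Ω_H ⊆ V^H`. -/
def RestrictsTo {ρ : Γ →* (W ≃ₗᵢ[ℝ] W)} {Ω : Set W} (H : Subgroup Γ)
    (f : GradLocalMap ρ Ω)
    (k : GradLocalMap (restrictAction ρ H) (omegaHSub ρ Ω H)) : Prop :=
  k.dom = Subtype.val ⁻¹' (f.dom ∩ omegaH ρ Ω H) ∧
  ∀ x : fixedSubmodule ρ H, x ∈ k.dom → (k.toFun x : W) = f.toFun (x : W)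

end Defs


/-! The otopy is constant in time, `h (t, x) = f x`, on `[0,1) × D_f ∪ [0,1] × (D_f ∖ Y)`.
This domain is open because `Y` is relatively closed in `Ω`, and since `Y` contains no zeros
of `f` the zero set of `h` is the compact set `[0,1] × f⁻¹(0)`. -/

section Shrinking

variable {Γ : Type*} [Group Γ] {W : Type*} [NormedAddCommGroup W] [InnerProductSpace ℝ W]
  [CompleteSpace W] {ρ : Γ →* (W ≃ₗᵢ[ℝ] W)} {Ω : Set W}

theorem mem_of_apply_mem_of_invariant {Y : Set W} (hY : ∀ (g : Γ) (x : W), x ∈ Y → ρ g x ∈ Y)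
    {g : Γ} {x : W} (hx : ρ g x ∈ Y) : x ∈ Y := by
  simpa [map_inv] using hY g⁻¹ _ hx

theorem isOpen_diff_of_eq_inter {A Y C U : Set W} (hA : IsOpen A) (hAU : A ⊆ U) (hC : IsClosed C)
    (hY : Y = C ∩ U) : IsOpen (A \ Y) := by
  have : A \ Y = A \ C := by
    ext x
    constructor
    · rintro ⟨hxA, hxY⟩
      exact ⟨hxA, fun hxC => hxY (hY ▸ ⟨hxC, hAU hxA⟩)⟩
    · rintro ⟨hxA, hxC⟩
      exact ⟨hxA, fun hxY => hxC (hY ▸ hxY).1⟩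
  exact this ▸ hA.sdiff hC

structure IsShrinking (f : EqLocalMap ρ Ω) (D : Set W) : Prop where
  subset : D ⊆ f.dom
  isOpen : IsOpen D
  invariant : ∀ (g : Γ) (x : W), x ∈ D → ρ g x ∈ D
  zeros_subset : {x ∈ f.dom | f.toFun x = 0} ⊆ D

namespace IsShrinking

variable {f : EqLocalMap ρ Ω} {D : Set W}

theorem zeros_eq (hD : IsShrinking f D) :
    {x ∈ D | f.toFun x = 0} = {x ∈ f.dom | f.toFun x = 0} :=
  Set.Subset.antisymm (fun _ hx => ⟨hD.subset hx.1, hx.2⟩) fun _ hx => ⟨hD.zeros_subset hx, hx.2⟩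

end IsShrinking

def EqLocalMap.restrict (f : EqLocalMap ρ Ω) {D : Set W} (hD : IsShrinking f D) :
    EqLocalMap ρ Ω where
  dom := D
  toFun := f.toFun
  dom_sub := hD.subset.trans f.dom_sub
  dom_open := hD.isOpen
  dom_inv := hD.invariant
  cont := f.cont.mono hD.subset
  equivariant g x hx := f.equivariant g x (hD.subset hx)
  zeros_compact := hD.zeros_eq ▸ f.zeros_compact

theorem IsGradMap.restrict {f : EqLocalMap ρ Ω} (hf : IsGradMap f) {D : Set W}
    (hD : IsShrinking f D) : IsGradMap (f.restrict hD) := by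
  obtain ⟨φ, hφinv, hφgrad⟩ := hf
  exact ⟨φ, fun g x hx => hφinv g x (hD.subset hx), fun x hx => hφgrad x (hD.subset hx)⟩

def GradLocalMap.restrict (f : GradLocalMap ρ Ω) {D : Set W} (hD : IsShrinking f.toEqLocalMap D) :
    GradLocalMap ρ Ω where
  toEqLocalMap := f.toEqLocalMap.restrict hD
  isGrad := f.isGrad.restrict hD

def shrinkDom (A D : Set W) : Set (ℝ × W) :=
  {p | p.1 ∈ Set.Icc 0 1 ∧ p.2 ∈ A ∧ (p.1 < 1 ∨ p.2 ∈ D)}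

theorem shrinkDom_eq {A D : Set W} (hAΩ : A ⊆ Ω) (hDA : D ⊆ A) :
    shrinkDom A D = (Set.Iio 1 ×ˢ A ∪ Set.univ ×ˢ D) ∩ Set.Icc 0 1 ×ˢ Ω := by
  ext ⟨t, x⟩
  simp only [shrinkDom, Set.mem_ofPred_eq, Set.mem_inter_iff, Set.mem_union, Set.mem_prod,
    Set.mem_Iio, Set.mem_univ, true_and]
  constructor
  · rintro ⟨ht, hxA, ht1 | hxD⟩
    exacts [⟨Or.inl ⟨ht1, hxA⟩, ht, hAΩ hxA⟩, ⟨Or.inr hxD, ht, hAΩ hxA⟩]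
  · rintro ⟨⟨ht1, hxA⟩ | hxD, ht, -⟩
    exacts [⟨ht, hxA, Or.inl ht1⟩, ⟨ht, hDA hxD, Or.inr hxD⟩]

theorem slice_zero_shrinkDom (A D : Set W) : {x | ((0 : ℝ), x) ∈ shrinkDom A D} = A := by
  ext x
  simp [shrinkDom]

theorem slice_one_shrinkDom {A D : Set W} (hDA : D ⊆ A) :
    {x | ((1 : ℝ), x) ∈ shrinkDom A D} = D := by
  ext x
  simpa [shrinkDom] using fun hxD => hDA hxD

def Otopy.shrink (f : EqLocalMap ρ Ω) {D : Set W} (hD : IsShrinking f D) : Otopy ρ Ω where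
  dom := shrinkDom f.dom D
  toFun p := f.toFun p.2
  dom_relOpen := ⟨_, (isOpen_Iio.prod f.dom_open).union (isOpen_univ.prod hD.isOpen),
    shrinkDom_eq f.dom_sub hD.subset⟩
  dom_inv g _ x := fun ⟨ht, hxA, hxD⟩ =>
    ⟨ht, f.dom_inv g x hxA, hxD.imp_right (hD.invariant g x)⟩
  cont := f.cont.comp continuous_snd.continuousOn fun _ hp => hp.2.1
  equivariant g _ x hx := f.equivariant g x hx.2.1
  zeros_compact := by
    have : {p ∈ shrinkDom f.dom D | f.toFun p.2 = 0} =
        Set.Icc 0 1 ×ˢ {x ∈ f.dom | f.toFun x = 0} := by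
      ext ⟨t, x⟩
      constructor
      · rintro ⟨⟨ht, hxA, -⟩, hx0⟩
        exact ⟨ht, hxA, hx0⟩
      · rintro ⟨ht, hxA, hx0⟩
        exact ⟨⟨ht, hxA, Or.inr (hD.zeros_subset ⟨hxA, hx0⟩)⟩, hx0⟩
    exact this ▸ isCompact_Icc.prod f.zeros_compact

theorem IsGradMap.isGrad_otopy_shrink {f : EqLocalMap ρ Ω} (hf : IsGradMap f) {D : Set W}
    (hD : IsShrinking f D) : (Otopy.shrink f hD).IsGrad := by
  obtain ⟨φ, hφinv, hφgrad⟩ := hf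
  exact fun _ => ⟨φ, fun g x hx => hφinv g x hx.2.1, fun x hx => hφgrad x hx.2.1⟩

theorem GradLocalMap.gradOtopic_restrict (f : GradLocalMap ρ Ω) {D : Set W}
    (hD : IsShrinking f.toEqLocalMap D) : GradOtopic f (f.restrict hD) :=
  ⟨Otopy.shrink f.toEqLocalMap hD, f.isGrad.isGrad_otopy_shrink hD,
    slice_zero_shrinkDom _ _, slice_one_shrinkDom hD.subset, fun _ _ => rfl, fun _ _ => rfl⟩

end Shrinking

theorem restriction_off_closed_invariant_general
    {G : Type*} [Group G]
    {V : Type*} [NormedAddCommGroup V] [InnerProductSpace ℝ V] [FiniteDimensional ℝ V]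
    (ρ : G →* (V ≃ₗᵢ[ℝ] V))
    (Ω : Set V)
    (Y : Set V) (hYinv : ∀ (g : G) (x : V), x ∈ Y → ρ g x ∈ Y)
    (hYcl : ∃ C : Set V, IsClosed C ∧ Y = C ∩ Ω)
    (f : GradLocalMap ρ Ω) (hz : {x ∈ f.dom | f.toFun x = 0} ∩ Y = ∅) :
    ∃ k : GradLocalMap ρ Ω, k.dom = f.dom \ Y ∧
      (∀ x ∈ k.dom, k.toFun x = f.toFun x) ∧ GradOtopic f k := by
  obtain ⟨C, hC, hYC⟩ := hYcl
  have hD : IsShrinking f.toEqLocalMap (f.dom \ Y) :=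
    { subset := Set.sdiff_subset
      isOpen := isOpen_diff_of_eq_inter f.dom_open f.dom_sub hC hYC
      invariant := fun g x hx =>
        ⟨f.dom_inv g x hx.1, fun hgx => hx.2 (mem_of_apply_mem_of_invariant hYinv hgx)⟩
      zeros_subset := fun x hx => ⟨hx.1, fun hxY => (hz.subset ⟨hx, hxY⟩ :)⟩ }
  exact ⟨f.restrict hD, rfl, fun _ _ => rfl, f.gradOtopic_restrict hD⟩

/-- If `Y ⊆ Ω` is closed (in `Ω`) and invariant and contains no zeros of `f`, then the
restriction `f|_(D_f ∖ Y)` is again an equivariant gradient local map and is gradient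
otopic to `f`. -/
theorem restriction_off_closed_invariant
    {n : ℕ} {G : Type*} [Group G] [TopologicalSpace G] [CompactSpace G]
    [ChartedSpace (EuclideanSpace ℝ (Fin n)) G] [LieGroup (𝓡 n) (⊤ : ℕ∞) G]
    {V : Type*} [NormedAddCommGroup V] [InnerProductSpace ℝ V] [FiniteDimensional ℝ V]
    (ρ : G →* (V ≃ₗᵢ[ℝ] V)) (hρ : Continuous fun p : G × V => ρ p.1 p.2)
    (Ω : Set V) (hΩo : IsOpen Ω) (hΩinv : ∀ (g : G) (x : V), x ∈ Ω → ρ g x ∈ Ω)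
    (Y : Set V) (hYsub : Y ⊆ Ω) (hYinv : ∀ (g : G) (x : V), x ∈ Y → ρ g x ∈ Y)
    (hYcl : ∃ C : Set V, IsClosed C ∧ Y = C ∩ Ω)
    (f : GradLocalMap ρ Ω) (hz : {x ∈ f.dom | f.toFun x = 0} ∩ Y = ∅) :
    ∃ k : GradLocalMap ρ Ω, k.dom = f.dom \ Y ∧
      (∀ x ∈ k.dom, k.toFun x = f.toFun x) ∧ GradOtopic f k :=
  restriction_off_closed_invariant_general ρ Ω Y hYinv hYcl f hz
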